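/- arXiv:2507.16055 — 6 statements merged into one kernel-verified Lean document; each statement's English description precedes it below -/
import Mathlib

section
/- Let (Δ_n) be a sequence of positive reals such that for each n either Δ_{n+1} ≤ (1/2)·Δ_n or Δ_{n+1} ≤ Δ_n − δ·Δ_n², where δ = min{c, 1/Δ_0} for some constant c > 0. Then for every ε > 0, Δ_k ≤ ε holds for all k ≥ max{⌈log₂(Δ_0/ε)⌉, ⌈(Δ_0 − ε)/(δ·ε·Δ_0)⌉}. -/
/-!
Either alternative of the recursion raises `1 / Δ n` by at least `δ`: halving doubles it, and
`δ ≤ 1 / Δ 0 ≤ 1 / Δ n` (both steps decrease `Δ` since `δ > 0`); the other step gives `(1 / x + δ) (x - δ x²) = 1 - δ² x² ≤ 1`.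
Hence `1 / Δ k ≥ 1 / Δ 0 + k δ`, which is at least `1 / ε` once `k δ ≥ 1 / ε - 1 / Δ 0`.
-/

lemma inv_add_le_inv_of_le_sub_mul_sq {x y δ : ℝ} (hy : 0 < y) (h : y ≤ x - δ * x ^ 2) :
    x⁻¹ + δ ≤ y⁻¹ := by
  have hq : 0 < x - δ * x ^ 2 := hy.trans_le h
  have hx : x ≠ 0 := by rintro rfl; simp at hq
  have hprod : (x⁻¹ + δ) * (x - δ * x ^ 2) = 1 - δ ^ 2 * x ^ 2 := by field_simp; ring
  calc x⁻¹ + δ ≤ (x - δ * x ^ 2)⁻¹ := by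
        rw [← one_div (x - _), le_div_iff₀ hq, hprod]; nlinarith [sq_nonneg (δ * x)]
    _ ≤ y⁻¹ := inv_anti₀ hy h

lemma inv_add_le_inv_of_le_half {x y δ : ℝ} (hy : 0 < y) (hδ : δ ≤ x⁻¹) (h : y ≤ 1 / 2 * x) :
    x⁻¹ + δ ≤ y⁻¹ :=
  calc x⁻¹ + δ ≤ (1 / 2 * x)⁻¹ := by
        rw [mul_inv, one_div, inv_inv]; linarith
    _ ≤ y⁻¹ := inv_anti₀ hy h

section HalvingOrQuadraticDecrease

variable {u : ℕ → ℝ} {δ : ℝ}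

lemma antitone_of_le_half_or_le_sub_mul_sq (hpos : ∀ n, 0 < u n) (hδ : 0 ≤ δ)
    (hrec : ∀ n, u (n + 1) ≤ 1 / 2 * u n ∨ u (n + 1) ≤ u n - δ * u n ^ 2) : Antitone u := by
  refine antitone_nat_of_succ_le fun n => ?_
  rcases hrec n with h | h
  · linarith [hpos n]
  · nlinarith [hpos n]

lemma inv_add_mul_le_inv_of_le_half_or_le_sub_mul_sq (hpos : ∀ n, 0 < u n) (hδ : 0 ≤ δ)
    (hδu : δ ≤ (u 0)⁻¹)
    (hrec : ∀ n, u (n + 1) ≤ 1 / 2 * u n ∨ u (n + 1) ≤ u n - δ * u n ^ 2) (n : ℕ) :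
    (u 0)⁻¹ + n * δ ≤ (u n)⁻¹ := by
  induction n with
  | zero => simp
  | succ n ih =>
    have hδn : δ ≤ (u n)⁻¹ :=
      hδu.trans (inv_anti₀ (hpos n) (antitone_of_le_half_or_le_sub_mul_sq hpos hδ hrec n.zero_le))
    have hstep : (u n)⁻¹ + δ ≤ (u (n + 1))⁻¹ := (hrec n).elim
      (inv_add_le_inv_of_le_half (hpos _) hδn) (inv_add_le_inv_of_le_sub_mul_sq (hpos _))
    push_cast
    linarith

end HalvingOrQuadraticDecrease

theorem stmt1_general (Δ : ℕ → ℝ) (c δ : ℝ) (hc : 0 < c)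
    (hpos : ∀ n, 0 < Δ n)
    (hδ : δ = min c (1 / Δ 0))
    (hrec : ∀ n, Δ (n + 1) ≤ (1 / 2) * Δ n ∨ Δ (n + 1) ≤ Δ n - δ * (Δ n) ^ 2) :
    ∀ ε : ℝ, 0 < ε → ε < Δ 0 →
      ∀ k : ℕ,
        (max (⌈Real.logb 2 (Δ 0 / ε)⌉₊) (⌈(Δ 0 - ε) / (δ * ε * Δ 0)⌉₊)) ≤ k →
        Δ k ≤ ε := by
  intro ε hε _ k hk
  have h0 := hpos 0
  have hδpos : 0 < δ := hδ ▸ lt_min hc (by positivity)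
  have hδle : δ ≤ (Δ 0)⁻¹ := hδ ▸ one_div (Δ 0) ▸ min_le_right _ _
  have hkδ : (Δ 0 - ε) / (δ * ε * Δ 0) ≤ k := Nat.ceil_le.mp ((le_max_right _ _).trans hk)
  have hinv : ε⁻¹ ≤ (Δ 0)⁻¹ + k * δ :=
    calc ε⁻¹ = (Δ 0)⁻¹ + (Δ 0 - ε) / (δ * ε * Δ 0) * δ := by field_simp; ring
      _ ≤ (Δ 0)⁻¹ + k * δ := by gcongr
  exact (inv_le_inv₀ hε (hpos k)).mp
    (hinv.trans (inv_add_mul_le_inv_of_le_half_or_le_sub_mul_sq hpos hδpos.le hδle hrec k))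

/-- Iteration complexity for the convex case (Theorem 4.6, scalar form):
if at each step either `Δ_{n+1} ≤ Δ_n/2` or `Δ_{n+1} ≤ Δ_n − δ Δ_n²` with
`δ = min{c, 1/Δ_0}`, then `Δ_k ≤ ε` for all
`k ≥ max{⌈log₂(Δ_0/ε)⌉, ⌈(Δ_0 − ε)/(δ ε Δ_0)⌉}`. -/
theorem stmt1 (Δ : ℕ → ℝ) (c δ : ℝ) (hc : 0 < c)
    (hpos : ∀ n, 0 < Δ n)
    (hmono : ∀ n, Δ (n + 1) ≤ Δ n)
    (hδ : δ = min c (1 / Δ 0))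
    (hrec : ∀ n, Δ (n + 1) ≤ (1 / 2) * Δ n ∨ Δ (n + 1) ≤ Δ n - δ * (Δ n) ^ 2) :
    ∀ ε : ℝ, 0 < ε → ε < Δ 0 →
      ∀ k : ℕ,
        (max (⌈Real.logb 2 (Δ 0 / ε)⌉₊) (⌈(Δ 0 - ε) / (δ * ε * Δ 0)⌉₊)) ≤ k →
        Δ k ≤ ε :=
  stmt1_general Δ c δ hc hpos hδ hrec
end

section
/- Let g : ℝᵈ → ℝ be convex and L-smooth, let x* be a global minimizer of g, and let λ ∈ (0, 2/L) with α := λL. Then for any x, the gradient step z = x − λ∇g(x) satisfies ‖x − z‖ ≤ √(α/(2 − α))·‖x − x*‖. -/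
/-!
By the descent lemma for an `L`-smooth `g`, the step `z = x - λ∇g(x)` decreases `g` by at least
`λ(1 - α/2)‖∇g(x)‖²`, while `∇g(x*) = 0` gives `g(x) - g(x*) ≤ (L/2)‖x - x*‖²`. As `g(x*) ≤ g(z)`,
`λ(2 - α)‖∇g(x)‖² ≤ L‖x - x*‖²`; multiplying by `λ/(2 - α)` gives `‖x - z‖² ≤ α/(2 - α)‖x - x*‖²`.
-/

open Set NNReal

section Descent

variable {E : Type*} [NormedAddCommGroup E] [NormedSpace ℝ E] {f : E → ℝ} {f' : E → E →L[ℝ] ℝ}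
  {K : ℝ≥0}

theorem le_add_fderiv_add_of_lipschitzWith (hf : ∀ x, HasFDerivAt f (f' x) x)
    (hf' : LipschitzWith K f') (x y : E) :
    f y ≤ f x + f' x (y - x) + K / 2 * ‖y - x‖ ^ 2 := by
  set v := y - x
  -- The remainder `φ` is antitone on `[0, 1]`: the Lipschitz bound makes its derivative `≤ 0`.
  let φ : ℝ → ℝ := fun t => f (x + t • v) - t * f' x v - K / 2 * t ^ 2 * ‖v‖ ^ 2
  let φ' : ℝ → ℝ := fun t => (f' (x + t • v) - f' x) v - K * t * ‖v‖ ^ 2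
  have hφ : ∀ t, HasDerivAt φ (φ' t) t := by
    intro t
    have hline : HasDerivAt (fun t : ℝ => x + t • v) v t := by
      simpa using ((hasDerivAt_id t).smul_const v).const_add x
    refine ((((hf _).comp_hasDerivAt t hline).sub ((hasDerivAt_id t).mul_const (f' x v))).sub
      (((hasDerivAt_pow 2 t).const_mul (K / 2 : ℝ)).mul_const (‖v‖ ^ 2))).congr_deriv ?_
    simp only [φ', sub_apply]
    ring
  have hφ'_nonpos : ∀ t ∈ Icc (0 : ℝ) 1, φ' t ≤ 0 := by
    intro t ht
    have hdist : ‖f' (x + t • v) - f' x‖ ≤ K * (t * ‖v‖) := by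
      simpa [dist_eq_norm, norm_smul, abs_of_nonneg ht.1] using hf'.dist_le_mul (x + t • v) x
    refine sub_nonpos.2 ?_
    calc (f' (x + t • v) - f' x) v ≤ ‖(f' (x + t • v) - f' x) v‖ := Real.le_norm_self _
      _ ≤ K * (t * ‖v‖) * ‖v‖ := (f' (x + t • v) - f' x).le_of_opNorm_le hdist v
      _ = K * t * ‖v‖ ^ 2 := by ring
  have hanti : AntitoneOn φ (Icc 0 1) :=
    antitoneOn_of_hasDerivWithinAt_nonpos (convex_Icc 0 1)
      (fun t _ => (hφ t).continuousAt.continuousWithinAt)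
      (fun t _ => (hφ t).hasDerivWithinAt)
      (fun t ht => hφ'_nonpos t (interior_subset ht))
  have := hanti (left_mem_Icc.2 zero_le_one) (right_mem_Icc.2 zero_le_one) zero_le_one
  simp only [φ, one_smul, zero_smul, add_zero, v, add_sub_cancel] at this
  linarith

end Descent

section GradientStep

variable {E : Type*} [NormedAddCommGroup E] [InnerProductSpace ℝ E] [CompleteSpace E]
  {f : E → ℝ} {f' : E → E} {K : ℝ≥0}

theorem le_add_inner_add_of_lipschitzWith (hf : ∀ x, HasGradientAt f (f' x) x)
    (hf' : LipschitzWith K f') (x y : E) :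
    f y ≤ f x + inner ℝ (f' x) (y - x) + K / 2 * ‖y - x‖ ^ 2 := by
  have hdual : LipschitzWith K (fun x => InnerProductSpace.toDual ℝ E (f' x)) := by
    refine LipschitzWith.of_dist_le_mul fun x y => ?_
    rw [(InnerProductSpace.toDual ℝ E).dist_map]
    exact hf'.dist_le_mul x y
  simpa using le_add_fderiv_add_of_lipschitzWith (fun x => (hf x).hasFDerivAt) hdual x y

theorem sub_le_of_forall_le_of_lipschitzWith (hf : ∀ x, HasGradientAt f (f' x) x)
    (hf' : LipschitzWith K f') {xstar : E} (hmin : ∀ y, f xstar ≤ f y) (x : E) :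
    f x - f xstar ≤ K / 2 * ‖x - xstar‖ ^ 2 := by
  have hzero : f' xstar = 0 := by
    have := ((isMinOn_univ_iff.2 hmin).isLocalMin Filter.univ_mem).hasFDerivAt_eq_zero
      (hf xstar).hasFDerivAt
    simpa using this
  have := le_add_inner_add_of_lipschitzWith hf hf' xstar x
  rw [hzero, inner_zero_left, add_zero] at this
  linarith

theorem gradient_step_le (hf : ∀ x, HasGradientAt f (f' x) x)
    (hf' : LipschitzWith K f') (x : E) (lam : ℝ) :
    f (x - lam • f' x) ≤ f x - lam * (1 - lam * K / 2) * ‖f' x‖ ^ 2 := by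
  have := le_add_inner_add_of_lipschitzWith hf hf' x (x - lam • f' x)
  rw [sub_sub_cancel_left, inner_neg_right, real_inner_smul_right, real_inner_self_eq_norm_sq,
    norm_neg, norm_smul, Real.norm_eq_abs, mul_pow, sq_abs] at this
  linarith

theorem norm_smul_gradient_le_of_forall_le (hf : ∀ x, HasGradientAt f (f' x) x)
    (hf' : LipschitzWith K f') {lam : ℝ} (hlam : 0 < lam) (hlamK : lam * K < 2) {xstar : E}
    (hmin : ∀ y, f xstar ≤ f y) (x : E) :
    ‖lam • f' x‖ ≤ √(lam * K / (2 - lam * K)) * ‖x - xstar‖ := by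
  have hdecrease := gradient_step_le hf hf' x lam
  have hsuboptimal := sub_le_of_forall_le_of_lipschitzWith hf hf' hmin x
  have hkey : lam * (2 - lam * K) * ‖f' x‖ ^ 2 ≤ K * ‖x - xstar‖ ^ 2 := by
    linarith [hmin (x - lam • f' x)]
  rw [← Real.sqrt_sq (norm_nonneg (x - xstar)), ← Real.sqrt_mul' _ (sq_nonneg _)]
  refine Real.le_sqrt_of_sq_le ?_
  rw [norm_smul, Real.norm_of_nonneg hlam.le, div_mul_eq_mul_div, le_div_iff₀ (by linarith)]
  nlinarith [mul_le_mul_of_nonneg_left hkey hlam.le]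

end GradientStep

theorem stmt6_general {d : ℕ} (g : EuclideanSpace ℝ (Fin d) → ℝ)
    (g' : EuclideanSpace ℝ (Fin d) → EuclideanSpace ℝ (Fin d))
    (L lam α : ℝ) (hlam : 0 < lam) (hlam2 : lam < 2 / L)
    (hα : α = lam * L)
    (hgrad : ∀ x, HasGradientAt g (g' x) x)
    (hlip : LipschitzWith L.toNNReal g')
    (xstar : EuclideanSpace ℝ (Fin d)) (hmin : ∀ y, g xstar ≤ g y)
    (x : EuclideanSpace ℝ (Fin d)) :
    ‖x - (x - lam • g' x)‖ ≤ Real.sqrt (α / (2 - α)) * ‖x - xstar‖ := by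
  have hL : 0 < L := (div_pos_iff_of_pos_left two_pos).1 (hlam.trans hlam2)
  have hK : (L.toNNReal : ℝ) = L := Real.coe_toNNReal L hL.le
  have hα2 : lam * L.toNNReal < 2 := by rw [hK]; exact (lt_div_iff₀ hL).1 hlam2
  rw [sub_sub_cancel, hα, ← hK]
  exact norm_smul_gradient_le_of_forall_le hgrad hlip hlam hα2 hmin x

/-- Euclidean gradient-step bound (specialization of Lemma 4.4): if `g` is
convex and `L`-smooth, `x*` is a global minimizer of `g`, `λ ∈ (0, 2/L)` and
`α = λL`, then the gradient step `z = x − λ∇g(x)` satisfies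
`‖x − z‖ ≤ √(α/(2 − α)) ‖x − x*‖`. -/
theorem stmt6 {d : ℕ} (g : EuclideanSpace ℝ (Fin d) → ℝ)
    (g' : EuclideanSpace ℝ (Fin d) → EuclideanSpace ℝ (Fin d))
    (L lam α : ℝ) (hL : 0 < L) (hlam : 0 < lam) (hlam2 : lam < 2 / L)
    (hα : α = lam * L)
    (hgconv : ConvexOn ℝ univ g)
    (hgrad : ∀ x, HasGradientAt g (g' x) x)
    (hlip : LipschitzWith L.toNNReal g')
    (xstar : EuclideanSpace ℝ (Fin d)) (hmin : ∀ y, g xstar ≤ g y)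
    (x : EuclideanSpace ℝ (Fin d)) :
    ‖x - (x - lam • g' x)‖ ≤ Real.sqrt (α / (2 - α)) * ‖x - xstar‖ :=
  stmt6_general g g' L lam α hlam hlam2 hα hgrad hlip xstar hmin x
end

section
/- Let g : ℝᵈ → ℝ be differentiable, h : ℝᵈ → ℝ convex, λ > 0, and suppose the descent condition g(T_λ(y)) ≤ g(y) + ⟨∇g(y), T_λ(y) − y⟩ + (1/(2λ))‖y − T_λ(y)‖² holds, where T_λ(y) = prox_{λh}(y − λ∇g(y)). Then for f = g + h and all x: f(x) − f(T_λ(y)) ≥ ℓ(x,y) + (1/(2λ))‖x − T_λ(y)‖² − (1/(2λ))‖x − y‖², where ℓ(x,y) = g(x) − g(y) − ⟨∇g(y), x − y⟩. -/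
open Set

/-!
Comparing `T = prox_{λh}(w)` with `T + t • (x - T)`, using convexity of `h` and letting `t → 0⁺`,
gives the subgradient inequality `(1/λ)⟪w - T, x - T⟫ ≤ h x - h T` with `w = y - λ∇g(y)`.
Adding the descent condition and the polarization identity for `⟪y - T, x - T⟫` yields the
claim.
-/

open Filter Topology
open scoped RealInnerProductSpace

lemma le_of_forall_mem_Ioc_le_add_mul {a b k : ℝ} (h : ∀ t ∈ Ioc (0 : ℝ) 1, a ≤ b + t * k) :
    a ≤ b := by
  have hlim : Tendsto (fun t : ℝ => b + t * k) (𝓝[>] 0) (𝓝 b) := by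
    have : Continuous fun t : ℝ => b + t * k := by fun_prop
    simpa using (this.tendsto 0).mono_left nhdsWithin_le_nhds
  exact ge_of_tendsto hlim (eventually_of_mem (Ioc_mem_nhdsGT one_pos) h)

section Prox

variable {E : Type*} [NormedAddCommGroup E] [InnerProductSpace ℝ E]

theorem ConvexOn.two_mul_inner_le_of_isMinOn_add_mul_sq_dist {h : E → ℝ}
    (hh : ConvexOn ℝ univ h) {c : ℝ} {w T : E}
    (hT : IsMinOn (fun z => h z + c * ‖z - w‖ ^ 2) univ T) (x : E) :
    2 * c * ⟪w - T, x - T⟫ ≤ h x - h T := by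
  refine le_of_forall_mem_Ioc_le_add_mul (k := c * ‖x - T‖ ^ 2) fun t ⟨ht0, ht1⟩ => ?_
  have hconv : h (T + t • (x - T)) ≤ (1 - t) * h T + t * h x := by
    have := hh.2 (mem_univ T) (mem_univ x) (sub_nonneg.2 ht1) ht0.le (by ring)
    rwa [show (1 - t) • T + t • x = T + t • (x - T) by module] at this
  have hexpand : ‖T + t • (x - T) - w‖ ^ 2
      = ‖T - w‖ ^ 2 - 2 * t * ⟪w - T, x - T⟫ + t ^ 2 * ‖x - T‖ ^ 2 := by
    rw [show T + t • (x - T) - w = t • (x - T) - (w - T) by abel, norm_sub_sq_real,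
      real_inner_smul_left, norm_smul, Real.norm_of_nonneg ht0.le, norm_sub_rev w T,
      real_inner_comm (w - T) (x - T)]
    ring
  have hmin := isMinOn_univ_iff.1 hT (T + t • (x - T))
  simp only [hexpand] at hmin
  have hscaled : t * (2 * c * ⟪w - T, x - T⟫) ≤ t * (h x - h T + t * (c * ‖x - T‖ ^ 2)) := by
    nlinarith
  exact le_of_mul_le_mul_left hscaled ht0

theorem prox_grad_inequality {g h : E → ℝ} (hh : ConvexOn ℝ univ h) {lam : ℝ} (hlam : lam ≠ 0)
    {v y T : E} (hT : IsMinOn (fun z => h z + 1 / (2 * lam) * ‖z - (y - lam • v)‖ ^ 2) univ T)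
    (hdescent : g T ≤ g y + ⟪v, T - y⟫ + 1 / (2 * lam) * ‖y - T‖ ^ 2) (x : E) :
    g x + h x - (g T + h T) ≥
      g x - g y - ⟪v, x - y⟫ + 1 / (2 * lam) * ‖x - T‖ ^ 2 - 1 / (2 * lam) * ‖x - y‖ ^ 2 := by
  have hsubgrad := hh.two_mul_inner_le_of_isMinOn_add_mul_sq_dist hT x
  have hsplit : 2 * (1 / (2 * lam)) * ⟪y - lam • v - T, x - T⟫
      = 2 * (1 / (2 * lam)) * ⟪y - T, x - T⟫ - ⟪v, x - T⟫ := by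
    rw [show y - lam • v - T = (y - T) - lam • v by abel, inner_sub_left, real_inner_smul_left]
    field_simp
  have hpolar : 2 * ⟪y - T, x - T⟫ = ‖x - T‖ ^ 2 + ‖y - T‖ ^ 2 - ‖x - y‖ ^ 2 := by
    have := norm_sub_sq_real (x - T) (y - T)
    rw [sub_sub_sub_cancel_right, real_inner_comm] at this
    linarith
  have hinner : ⟪v, x - T⟫ + ⟪v, T - y⟫ = ⟪v, x - y⟫ := by
    rw [← inner_add_right, sub_add_sub_cancel]
  linear_combination hsubgrad - hsplit + hdescent + hinner - 1 / (2 * lam) * hpolar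

end Prox

theorem stmt7_general {d : ℕ} (g h : EuclideanSpace ℝ (Fin d) → ℝ)
    (g' : EuclideanSpace ℝ (Fin d) → EuclideanSpace ℝ (Fin d))
    (lam : ℝ) (hlam : 0 < lam)
    (hhconv : ConvexOn ℝ univ h)
    (prox : EuclideanSpace ℝ (Fin d) → EuclideanSpace ℝ (Fin d))
    (hprox : ∀ w, ∀ z, h (prox w) + (1 / (2 * lam)) * ‖prox w - w‖ ^ 2 ≤
      h z + (1 / (2 * lam)) * ‖z - w‖ ^ 2)
    (y : EuclideanSpace ℝ (Fin d))
    (hdescent :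
      g (prox (y - lam • g' y)) ≤ g y
        + inner ℝ (g' y) (prox (y - lam • g' y) - y)
        + (1 / (2 * lam)) * ‖y - prox (y - lam • g' y)‖ ^ 2) :
    ∀ x : EuclideanSpace ℝ (Fin d),
      (g x + h x) - (g (prox (y - lam • g' y)) + h (prox (y - lam • g' y))) ≥
        (g x - g y - inner ℝ (g' y) (x - y))
        + (1 / (2 * lam)) * ‖x - prox (y - lam • g' y)‖ ^ 2
        - (1 / (2 * lam)) * ‖x - y‖ ^ 2 :=
  prox_grad_inequality hhconv hlam.ne' (isMinOn_univ_iff.2 (hprox _)) hdescent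

/-- Euclidean fundamental prox-grad inequality (specialization of
Theorem 5.1/Corollary 5.2): if the descent condition holds at `y`, then for
`f = g + h` and all `x`,
`f(x) − f(T_λ y) ≥ ℓ(x,y) + (1/(2λ))‖x − T_λ y‖² − (1/(2λ))‖x − y‖²`,
where `ℓ(x,y) = g(x) − g(y) − ⟨∇g(y), x − y⟩`. -/
theorem stmt7 {d : ℕ} (g h : EuclideanSpace ℝ (Fin d) → ℝ)
    (g' : EuclideanSpace ℝ (Fin d) → EuclideanSpace ℝ (Fin d))
    (lam : ℝ) (hlam : 0 < lam)
    (hgrad : ∀ x, HasGradientAt g (g' x) x)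
    (hhconv : ConvexOn ℝ univ h)
    (prox : EuclideanSpace ℝ (Fin d) → EuclideanSpace ℝ (Fin d))
    (hprox : ∀ w, ∀ z, h (prox w) + (1 / (2 * lam)) * ‖prox w - w‖ ^ 2 ≤
      h z + (1 / (2 * lam)) * ‖z - w‖ ^ 2)
    (y : EuclideanSpace ℝ (Fin d))
    (hdescent :
      g (prox (y - lam • g' y)) ≤ g y
        + inner ℝ (g' y) (prox (y - lam • g' y) - y)
        + (1 / (2 * lam)) * ‖y - prox (y - lam • g' y)‖ ^ 2) :
    ∀ x : EuclideanSpace ℝ (Fin d),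
      (g x + h x) - (g (prox (y - lam • g' y)) + h (prox (y - lam • g' y))) ≥
        (g x - g y - inner ℝ (g' y) (x - y))
        + (1 / (2 * lam)) * ‖x - prox (y - lam • g' y)‖ ^ 2
        - (1 / (2 * lam)) * ‖x - y‖ ^ 2 :=
  stmt7_general g h g' lam hlam hhconv prox hprox y hdescent
end

section
/- Let x ∈ H^n (hyperboloid model) with |x₁| ≤ ⋯ ≤ |x_n|, and for t in the interval I_k = (|x_{k−1}|, |x_k|) define φ_k(t) = (x_{n+1}(x_{n+1}+t) − Σ_{i=k}^{n}(x_i² − t|x_i|)) / √((x_{n+1}+t)² − Σ_{i=k}^{n}(|x_i| − t)²). Then φ_k is differentiable with φ_k'(t) > 0 on I_k, i.e., φ_k is strictly increasing on each interval I_k. -/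
open Set

/-!
Writing `A = x_{n+1}`, the numerator of `φ_k` is affine and the radicand quadratic in `t`:
`a + b t` and `c t² + 2 b t + a`, with `a = A² − ∑_{i ≥ k} x_i² ≥ 1` (by the hyperboloid
equation), `b = A + ∑_{i ≥ k} |x_i| > 0` and `c = 1 − (n − k + 1) ≤ 0`. Because the linear
coefficient of the radicand is twice the slope of the numerator, the quotient rule collapses to
`φ_k'(t) = t (b² − c a) / (c t² + 2 b t + a)^{3/2}`, which is positive for `t > 0`.
-/

theorem hasDerivAt_div_sqrt_quadratic {a b c t : ℝ} (ht : 0 < c * t ^ 2 + 2 * b * t + a) :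
    HasDerivAt (fun s => (a + b * s) / √(c * s ^ 2 + 2 * b * s + a))
      (t * (b ^ 2 - c * a) / ((c * t ^ 2 + 2 * b * t + a) * √(c * t ^ 2 + 2 * b * t + a))) t := by
  have hquad : HasDerivAt (fun s => c * s ^ 2 + 2 * b * s + a) (c * (2 * t) + 2 * b) t := by
    simpa using (((hasDerivAt_pow 2 t).const_mul c).add
      ((hasDerivAt_id t).const_mul (2 * b))).add_const a
  have hlin : HasDerivAt (fun s => a + b * s) b t := by
    simpa using ((hasDerivAt_id t).const_mul b).const_add a
  have hroot := Real.sqrt_pos.mpr ht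
  refine (hlin.div (hquad.sqrt ht.ne') hroot.ne').congr_deriv ?_
  set q := c * t ^ 2 + 2 * b * t + a with hq
  field_simp
  rw [Real.sq_sqrt ht.le, hq]
  ring

theorem strictMonoOn_div_sqrt_quadratic {a b c l u : ℝ} (hl : 0 ≤ l) (hdisc : 0 < b ^ 2 - c * a)
    (hpos : ∀ t ∈ Ioo l u, 0 < c * t ^ 2 + 2 * b * t + a) :
    let f : ℝ → ℝ := fun s => (a + b * s) / √(c * s ^ 2 + 2 * b * s + a)
    (∀ t ∈ Ioo l u, DifferentiableAt ℝ f t ∧ 0 < deriv f t) ∧ StrictMonoOn f (Ioo l u) := by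
  intro f
  have hderiv : ∀ t ∈ Ioo l u, DifferentiableAt ℝ f t ∧ 0 < deriv f t := fun t ht => by
    have hf := hasDerivAt_div_sqrt_quadratic (hpos t ht)
    refine ⟨hf.differentiableAt, hf.deriv ▸ ?_⟩
    have := hpos t ht
    have : 0 < t := hl.trans_lt ht.1
    positivity
  refine ⟨hderiv, strictMonoOn_of_deriv_pos (convex_Ioo l u) ?_ ?_⟩
  · exact fun t ht => (hderiv t ht).1.continuousAt.continuousWithinAt
  · exact fun t ht => (hderiv t (by rwa [interior_Ioo] at ht)).2

theorem Finset.sum_abs_sub_sq {ι : Type*} (s : Finset ι) (y : ι → ℝ) (t : ℝ) :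
    ∑ i ∈ s, (|y i| - t) ^ 2 = ∑ i ∈ s, y i ^ 2 - 2 * t * ∑ i ∈ s, |y i| + s.card * t ^ 2 := by
  simp only [sub_sq, sq_abs, Finset.sum_add_distrib, Finset.sum_sub_distrib, Finset.mul_sum,
    Finset.sum_const, nsmul_eq_mul]
  congr 2
  exact Finset.sum_congr rfl fun i _ => by ring

theorem stmt13_general (n : ℕ) (x : ℕ → ℝ) (k : ℕ)
    (hhyp : (∑ i ∈ Finset.Icc 1 n, (x i) ^ 2) - (x (n + 1)) ^ 2 = -1)
    (hxpos : 0 < x (n + 1))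
    (hk1 : 1 ≤ k) (hkn : k ≤ n) :
    let φ : ℝ → ℝ := fun t =>
      (x (n + 1) * (x (n + 1) + t)
          - ∑ i ∈ Finset.Icc k n, ((x i) ^ 2 - t * |x i|)) /
        Real.sqrt ((x (n + 1) + t) ^ 2 - ∑ i ∈ Finset.Icc k n, (|x i| - t) ^ 2)
    let I : Set ℝ := Ioo (|x (k - 1)|) (|x k|)
    (∀ t ∈ I,
        0 < (x (n + 1) + t) ^ 2 - ∑ i ∈ Finset.Icc k n, (|x i| - t) ^ 2) →
    (∀ t ∈ I, DifferentiableAt ℝ φ t ∧ 0 < deriv φ t) ∧ StrictMonoOn φ I := by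
  intro φ I hpos
  set A := x (n + 1)
  set S₁ := ∑ i ∈ Finset.Icc k n, |x i|
  set S₂ := ∑ i ∈ Finset.Icc k n, x i ^ 2
  set m : ℝ := ((Finset.Icc k n).card : ℝ)
  have hradicand (t : ℝ) : (A + t) ^ 2 - ∑ i ∈ Finset.Icc k n, (|x i| - t) ^ 2
      = (1 - m) * t ^ 2 + 2 * (A + S₁) * t + (A ^ 2 - S₂) := by
    rw [Finset.sum_abs_sub_sq]; ring
  have hφ : φ = fun t => (A ^ 2 - S₂ + (A + S₁) * t)
      / √((1 - m) * t ^ 2 + 2 * (A + S₁) * t + (A ^ 2 - S₂)) := by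
    funext t
    show (A * (A + t) - ∑ i ∈ Finset.Icc k n, (x i ^ 2 - t * |x i|))
      / √((A + t) ^ 2 - ∑ i ∈ Finset.Icc k n, (|x i| - t) ^ 2) = _
    rw [hradicand, Finset.sum_sub_distrib, ← Finset.mul_sum]
    ring
  have hS₂ : S₂ < A ^ 2 := by
    have : S₂ ≤ ∑ i ∈ Finset.Icc 1 n, x i ^ 2 :=
      Finset.sum_le_sum_of_subset_of_nonneg (Finset.Icc_subset_Icc hk1 le_rfl)
        fun i _ _ => sq_nonneg _
    linarith
  have hm : 1 ≤ m := by
    have : 1 ≤ (Finset.Icc k n).card := by rw [Nat.card_Icc]; omega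
    exact Nat.one_le_cast.mpr this
  have hdisc : 0 < (A + S₁) ^ 2 - (1 - m) * (A ^ 2 - S₂) := by
    have : 0 ≤ S₁ := Finset.sum_nonneg fun i _ => abs_nonneg _
    nlinarith
  rw [hφ]
  exact strictMonoOn_div_sqrt_quadratic (abs_nonneg _) hdisc
    fun t ht => hradicand t ▸ hpos t ht

/-- Strict monotonicity of `φ_k(t) = −⟨p_x(t), x⟩_M` on the interval
`I_k = (|x_{k−1}|, |x_k|)` (core computation in the proof of Theorem 6.1).
Indices run from `1` to `n+1`, with `x 0 = 0`. -/
theorem stmt13 (n : ℕ) (x : ℕ → ℝ) (k : ℕ)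
    (hx0 : x 0 = 0)
    (hhyp : (∑ i ∈ Finset.Icc 1 n, (x i) ^ 2) - (x (n + 1)) ^ 2 = -1)
    (hxpos : 0 < x (n + 1))
    (hsorted : ∀ i j, 1 ≤ i → i ≤ j → j ≤ n → |x i| ≤ |x j|)
    (hk1 : 1 ≤ k) (hkn : k ≤ n) :
    let φ : ℝ → ℝ := fun t =>
      (x (n + 1) * (x (n + 1) + t)
          - ∑ i ∈ Finset.Icc k n, ((x i) ^ 2 - t * |x i|)) /
        Real.sqrt ((x (n + 1) + t) ^ 2 - ∑ i ∈ Finset.Icc k n, (|x i| - t) ^ 2)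
    let I : Set ℝ := Ioo (|x (k - 1)|) (|x k|)
    (∀ t ∈ I,
        0 < (x (n + 1) + t) ^ 2 - ∑ i ∈ Finset.Icc k n, (|x i| - t) ^ 2) →
    (∀ t ∈ I, DifferentiableAt ℝ φ t ∧ 0 < deriv φ t) ∧ StrictMonoOn φ I :=
  stmt13_general n x k hhyp hxpos hk1 hkn
end

section
/- Let h : ℝᵈ → ℝ be convex and λ > 0, and consider the proximal point method with constant stepsize λ: given p_0 ∈ ℝᵈ, the iterates p_{n+1} = prox_{λh}(p_n). Then h(p_n) − h(p*) ≤ ‖p_0 − p*‖²/(2λn) for any minimizer p* of h and all n ≥ 1. -/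
open Set RealInnerProductSpace

section Aux

variable {d : ℕ}

/-- Parallelogram-type identity for convex combinations. -/
lemma combo_norm_sq (t : ℝ) (v w : EuclideanSpace ℝ (Fin d)) :
    ‖(1 - t) • v + t • w‖ ^ 2
      = (1 - t) * ‖v‖ ^ 2 + t * ‖w‖ ^ 2 - t * (1 - t) * ‖w - v‖ ^ 2 := by
  have h1 := (real_inner_self_eq_norm_sq ((1 - t) • v + t • w)).symm
  have h2 := (real_inner_self_eq_norm_sq (w - v)).symm
  have hv := (real_inner_self_eq_norm_sq v).symm
  have hw := (real_inner_self_eq_norm_sq w).symm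
  rw [h1, h2, hv, hw]
  simp only [inner_add_add_self, inner_sub_sub_self, real_inner_smul_left,
    real_inner_smul_right, real_inner_comm v w]
  ring

/-- Three point inequality for the prox operator of a convex function. -/
lemma three_point (h : EuclideanSpace ℝ (Fin d) → ℝ)
    (lam : ℝ) (hlam : 0 < lam)
    (hhconv : ConvexOn ℝ univ h)
    (prox : EuclideanSpace ℝ (Fin d) → EuclideanSpace ℝ (Fin d))
    (hprox : ∀ y, ∀ z, h (prox y) + (1 / (2 * lam)) * ‖prox y - y‖ ^ 2 ≤
      h z + (1 / (2 * lam)) * ‖z - y‖ ^ 2)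
    (y z : EuclideanSpace ℝ (Fin d)) :
    h (prox y) + (1 / (2 * lam)) * ‖prox y - y‖ ^ 2
        + (1 / (2 * lam)) * ‖z - prox y‖ ^ 2
      ≤ h z + (1 / (2 * lam)) * ‖z - y‖ ^ 2 := by
  set u := prox y with hu
  set C : ℝ := (1 / (2 * lam)) * ‖z - u‖ ^ 2 with hC
  have hCnn : 0 ≤ C := by positivity
  refine le_of_forall_pos_le_add ?_
  intro ε hε
  set t : ℝ := min (1/2) (ε / (C + 1)) with ht
  have ht0 : 0 < t := by
    apply lt_min (by norm_num)
    positivity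
  have ht1 : t < 1 := lt_of_le_of_lt (min_le_left _ _) (by norm_num)
  have htC : t * C ≤ ε := by
    have h1 : t ≤ ε / (C + 1) := min_le_right _ _
    have h2 : C ≤ C + 1 := by linarith
    calc t * C ≤ (ε / (C + 1)) * C := by
          apply mul_le_mul_of_nonneg_right h1 hCnn
      _ ≤ ε := by
          rw [div_mul_eq_mul_div, div_le_iff₀ (by positivity)]
          nlinarith
  -- convex combination point
  have hconv := hhconv.2 (mem_univ u) (mem_univ z) (by linarith : (0:ℝ) ≤ 1 - t)
    (le_of_lt ht0) (by ring)
  simp only [smul_eq_mul] at hconv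
  have hpx := hprox y ((1 - t) • u + t • z)
  have hid : ‖((1 - t) • u + t • z) - y‖ ^ 2
      = (1 - t) * ‖u - y‖ ^ 2 + t * ‖z - y‖ ^ 2 - t * (1 - t) * ‖z - u‖ ^ 2 := by
    have : ((1 - t) • u + t • z) - y = (1 - t) • (u - y) + t • (z - y) := by
      module
    rw [this, combo_norm_sq]
    congr 2
    rw [show (z - y) - (u - y) = z - u by abel]
  -- combine
  have hmain : h u + (1 / (2 * lam)) * ‖u - y‖ ^ 2
      ≤ (1 - t) * h u + t * h z
        + (1 / (2 * lam)) * ((1 - t) * ‖u - y‖ ^ 2 + t * ‖z - y‖ ^ 2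
            - t * (1 - t) * ‖z - u‖ ^ 2) := by
    calc h u + (1 / (2 * lam)) * ‖u - y‖ ^ 2
        ≤ h ((1 - t) • u + t • z) + (1 / (2 * lam)) * ‖((1 - t) • u + t • z) - y‖ ^ 2 := hpx
      _ ≤ (1 - t) * h u + t * h z + (1 / (2 * lam)) * ‖((1 - t) • u + t • z) - y‖ ^ 2 := by
          linarith
      _ = _ := by rw [hid]
  -- divide by t
  have hdiv : h u + (1 / (2 * lam)) * ‖u - y‖ ^ 2 + (1 - t) * C
      ≤ h z + (1 / (2 * lam)) * ‖z - y‖ ^ 2 := by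
    have hinv : 0 < (2 * lam) := by linarith
    rw [hC]
    nlinarith [hmain, sq_nonneg ‖z - u‖, mul_pos ht0 (by positivity : (0:ℝ) < 1 / (2*lam))]
  calc h u + (1 / (2 * lam)) * ‖u - y‖ ^ 2 + C
      = (h u + (1 / (2 * lam)) * ‖u - y‖ ^ 2 + (1 - t) * C) + t * C := by ring
    _ ≤ (h z + (1 / (2 * lam)) * ‖z - y‖ ^ 2) + ε := add_le_add hdiv htC

end Aux

/-- Euclidean rate of the proximal point method (specialization of the
`O(L R²/(2βk))` rate from Section 5): with `h` convex, `λ > 0`, and iterates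
`p_{n+1} = prox_{λh}(p_n)`, for any minimizer `p*` of `h` and all `n ≥ 1`,
`h(p_n) − h(p*) ≤ ‖p_0 − p*‖²/(2λn)`. -/
theorem stmt15 {d : ℕ} (h : EuclideanSpace ℝ (Fin d) → ℝ)
    (lam : ℝ) (hlam : 0 < lam)
    (hhconv : ConvexOn ℝ univ h)
    (prox : EuclideanSpace ℝ (Fin d) → EuclideanSpace ℝ (Fin d))
    (hprox : ∀ y, ∀ z, h (prox y) + (1 / (2 * lam)) * ‖prox y - y‖ ^ 2 ≤
      h z + (1 / (2 * lam)) * ‖z - y‖ ^ 2)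
    (p : ℕ → EuclideanSpace ℝ (Fin d))
    (hiter : ∀ k, p (k + 1) = prox (p k))
    (pstar : EuclideanSpace ℝ (Fin d)) (hmin : ∀ z, h pstar ≤ h z) :
    ∀ n : ℕ, 1 ≤ n →
      h (p n) - h pstar ≤ ‖p 0 - pstar‖ ^ 2 / (2 * lam * n) := by
  intro n hn
  have hlam2 : (0:ℝ) < 2 * lam := by linarith
  -- gap and distance
  set G : ℕ → ℝ := fun k => h (p k) - h pstar with hG
  set D : ℕ → ℝ := fun k => (1 / (2 * lam)) * ‖pstar - p k‖ ^ 2 with hD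
  -- step inequality
  have hstep : ∀ k, G (k + 1) ≤ D k - D (k + 1) := by
    intro k
    have := three_point h lam hlam hhconv prox hprox (p k) pstar
    rw [← hiter k] at this
    have hnn : 0 ≤ (1 / (2 * lam)) * ‖p (k+1) - p k‖ ^ 2 := by positivity
    simp only [hG, hD]
    nlinarith [this]
  -- monotone decrease of the gap
  have hmono : ∀ k, G (k + 1) ≤ G k := by
    intro k
    have := hprox (p k) (p k)
    rw [← hiter k] at this
    have hnn : 0 ≤ (1 / (2 * lam)) * ‖p (k+1) - p k‖ ^ 2 := by positivity
    simp only [hG, sub_self, norm_zero] at this ⊢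
    nlinarith [this]
  have hanti : ∀ i j, i ≤ j → G j ≤ G i := by
    intro i j hij
    induction j with
    | zero => simpa [Nat.le_zero.mp hij]
    | succ m ih =>
      rcases Nat.lt_or_ge i (m+1) with hlt | hge
      · exact le_trans (hmono m) (ih (Nat.lt_succ_iff.mp hlt))
      · have : i = m + 1 := le_antisymm hij hge
        simp [this]
  -- telescoping sum
  have htel : ∑ k ∈ Finset.range n, G (k + 1) ≤ D 0 := by
    have hsum : ∑ k ∈ Finset.range n, G (k + 1)
        ≤ ∑ k ∈ Finset.range n, (D k - D (k + 1)) :=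
      Finset.sum_le_sum fun k _ => hstep k
    have hDnn : 0 ≤ D n := by simp only [hD]; positivity
    rw [Finset.sum_range_sub' D] at hsum
    linarith
  -- each term is at least G n
  have hlb : (n : ℝ) * G n ≤ ∑ k ∈ Finset.range n, G (k + 1) := by
    have : ∀ k ∈ Finset.range n, G n ≤ G (k + 1) := by
      intro k hk
      exact hanti (k + 1) n (Finset.mem_range.mp hk)
    calc (n : ℝ) * G n = ∑ _k ∈ Finset.range n, G n := by
          rw [Finset.sum_const, Finset.card_range, nsmul_eq_mul]
      _ ≤ _ := Finset.sum_le_sum this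
  have hnpos : (0:ℝ) < n := by exact_mod_cast hn
  have hD0 : D 0 = ‖p 0 - pstar‖ ^ 2 / (2 * lam) := by
    simp only [hD, norm_sub_rev]
    ring
  have : (n : ℝ) * G n ≤ ‖p 0 - pstar‖ ^ 2 / (2 * lam) := by
    rw [← hD0]; linarith
  have hGn : G n ≤ ‖p 0 - pstar‖ ^ 2 / (2 * lam) / n := by
    rw [le_div_iff₀ hnpos]
    linarith [this]
  calc h (p n) - h pstar = G n := rfl
    _ ≤ ‖p 0 - pstar‖ ^ 2 / (2 * lam) / n := hGn
    _ = ‖p 0 - pstar‖ ^ 2 / (2 * lam * n) := by rw [div_div]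
end

section
/- Let (Δ_n) be a nonincreasing sequence of nonnegative reals and suppose that for constants λ > 0, ζ ≥ 1, R ≥ 0 one has 2λ·(ζ(Δ_n − Δ_{n+1}) − Δ_{n+1}) ≥ r_{n+1}² − r_n² for all n, where r_n ≥ 0 and r_0 = R, r_n ≤ R. Then for all k ≥ 1: Δ_k ≤ (R² + 2λζΔ_0)/(2λ(ζ + k)). -/
/-! The quantity `E_n = r_n² + 2λ(ζ Δ_n + Δ_1 + ⋯ + Δ_n)` is nonincreasing, since its increments are
exactly what the recursion bounds by zero. Hence `E_k ≤ E_0 = R² + 2λζΔ_0`, while monotonicity of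
`Δ` gives `E_k ≥ 2λ(ζ + k) Δ_k`. -/

open Finset

theorem nsmul_le_sum_range_succ_of_antitone {α : Type*} [AddCommMonoid α] [PartialOrder α]
    [AddLeftMono α] {f : ℕ → α} (hf : Antitone f) (k : ℕ) :
    k • f k ≤ ∑ i ∈ range k, f (i + 1) := by
  simpa using card_nsmul_le_sum (range k) (fun i => f (i + 1)) (f k)
    fun i hi => hf (mem_range.mp hi)

theorem stmt16_general (Δ r : ℕ → ℝ) (lam ζ R : ℝ)
    (hlam : 0 < lam) (hζ : 1 ≤ ζ)
    (hΔmono : ∀ n, Δ (n + 1) ≤ Δ n)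
    (hr0 : r 0 = R)
    (hrec : ∀ n, 2 * lam * (ζ * (Δ n - Δ (n + 1)) - Δ (n + 1)) ≥
      (r (n + 1)) ^ 2 - (r n) ^ 2) :
    ∀ k : ℕ, 1 ≤ k →
      Δ k ≤ (R ^ 2 + 2 * lam * ζ * Δ 0) / (2 * lam * (ζ + k)) := by
  intro k _
  set E : ℕ → ℝ := fun n => r n ^ 2 + 2 * lam * (ζ * Δ n + ∑ i ∈ range n, Δ (i + 1))
  have hE_anti : Antitone E := antitone_nat_of_succ_le fun n => by
    simp only [E, sum_range_succ]
    linarith [hrec n]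
  have hE_le : E k ≤ R ^ 2 + 2 * lam * ζ * Δ 0 := by
    simpa [E, hr0, mul_assoc] using hE_anti (Nat.zero_le k)
  have hsum : (k : ℝ) * Δ k ≤ ∑ i ∈ range k, Δ (i + 1) := by
    simpa using nsmul_le_sum_range_succ_of_antitone (antitone_nat_of_succ_le hΔmono) k
  have hden : 0 < 2 * lam * (ζ + k) := mul_pos (by positivity) (by linarith [k.cast_nonneg (α := ℝ)])
  rw [le_div_iff₀ hden]
  linarith [mul_le_mul_of_nonneg_left hsum (by positivity : (0:ℝ) ≤ 2 * lam), sq_nonneg (r k)]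

/-- Abstract telescoping argument recovering the Riemannian gradient descent
rate (Section 5): if `Δ` is nonincreasing, nonnegative, and
`2λ(ζ(Δ_n − Δ_{n+1}) − Δ_{n+1}) ≥ r_{n+1}² − r_n²` with `r_0 = R`, `r_n ≤ R`,
then `Δ_k ≤ (R² + 2λζΔ_0)/(2λ(ζ + k))` for all `k ≥ 1`. -/
theorem stmt16 (Δ r : ℕ → ℝ) (lam ζ R : ℝ)
    (hlam : 0 < lam) (hζ : 1 ≤ ζ) (hR : 0 ≤ R)
    (hΔnonneg : ∀ n, 0 ≤ Δ n) (hΔmono : ∀ n, Δ (n + 1) ≤ Δ n)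
    (hrnonneg : ∀ n, 0 ≤ r n) (hr0 : r 0 = R) (hrR : ∀ n, r n ≤ R)
    (hrec : ∀ n, 2 * lam * (ζ * (Δ n - Δ (n + 1)) - Δ (n + 1)) ≥
      (r (n + 1)) ^ 2 - (r n) ^ 2) :
    ∀ k : ℕ, 1 ≤ k →
      Δ k ≤ (R ^ 2 + 2 * lam * ζ * Δ 0) / (2 * lam * (ζ + k)) :=
  stmt16_general Δ r lam ζ R hlam hζ hΔmono hr0 hrec
end
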